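/- Let C be the 3×6 constraint matrix of an interior face split point and define ψ3 = e3 + e1 + e2, ψ4 = e4 + e1, ψ5 = e5 + e2, ψ6 = e6 − e1 − e2 in ℝ^6. Then {ψ3, ψ4, ψ5, ψ6} is a basis of ker C. -/
import Mathlib


theorem stmt_8 :
    LinearIndependent ℝ
      ![((Pi.single 2 1 + Pi.single 0 1 + Pi.single 1 1 : Fin 6 → ℝ)),
        ((Pi.single 3 1 + Pi.single 0 1 : Fin 6 → ℝ)),
        ((Pi.single 4 1 + Pi.single 1 1 : Fin 6 → ℝ)),
        ((Pi.single 5 1 - Pi.single 0 1 - Pi.single 1 1 : Fin 6 → ℝ))] ∧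
    Submodule.span ℝ
      (Set.range
        ![((Pi.single 2 1 + Pi.single 0 1 + Pi.single 1 1 : Fin 6 → ℝ)),
          ((Pi.single 3 1 + Pi.single 0 1 : Fin 6 → ℝ)),
          ((Pi.single 4 1 + Pi.single 1 1 : Fin 6 → ℝ)),
          ((Pi.single 5 1 - Pi.single 0 1 - Pi.single 1 1 : Fin 6 → ℝ))])
      = LinearMap.ker (Matrix.mulVecLin
          (!![1, -1, 0, -1, 1, 0;
              0, 1, -1, 0, -1, 1;
              -1, 0, 1, 1, 0, -1] : Matrix (Fin 3) (Fin 6) ℝ)) := by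
  constructor
  · rw [Fintype.linearIndependent_iff]
    intro g hg i
    have h2 := congrFun hg 2
    have h3 := congrFun hg 3
    have h4 := congrFun hg 4
    have h5 := congrFun hg 5
    simp [Fin.sum_univ_four, Pi.single_apply, Matrix.cons_val_succ, Matrix.cons_val_zero, Matrix.cons_val_one, Matrix.vecHead, Matrix.vecTail] at h2 h3 h4 h5
    fin_cases i <;> assumption
  · apply le_antisymm
    · rw [Submodule.span_le]
      rintro _ ⟨i, rfl⟩
      rw [SetLike.mem_coe, LinearMap.mem_ker]
      fin_cases i <;>
        · funext j
          fin_cases j <;>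
            simp [Matrix.mulVecLin_apply, Matrix.mulVec, dotProduct,
              Fin.sum_univ_six, Pi.single_apply, Matrix.cons_val_succ, Matrix.cons_val_zero, Matrix.cons_val_one, Matrix.vecHead, Matrix.vecTail, show ![(1:ℝ),-1,0,-1,1,0] 5 = 0 from rfl, show ![(0:ℝ),1,-1,0,-1,1] 5 = 1 from rfl, show ![(-1:ℝ),0,1,1,0,-1] 5 = -1 from rfl]
    · intro x hx
      rw [LinearMap.mem_ker] at hx
      have h0 := congrFun hx 0
      have h1 := congrFun hx 1
      have h2 := congrFun hx 2
      simp [Matrix.mulVecLin_apply, Matrix.mulVec, dotProduct,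
        Fin.sum_univ_six, Matrix.cons_val_succ, Matrix.cons_val_zero, Matrix.cons_val_one, Matrix.vecHead, Matrix.vecTail, show ![(1:ℝ),-1,0,-1,1,0] 5 = 0 from rfl, show ![(0:ℝ),1,-1,0,-1,1] 5 = 1 from rfl, show ![(-1:ℝ),0,1,1,0,-1] 5 = -1 from rfl] at h0 h1 h2
      have hxe : x = x 2 • (Pi.single 2 1 + Pi.single 0 1 + Pi.single 1 1 : Fin 6 → ℝ)
          + x 3 • (Pi.single 3 1 + Pi.single 0 1 : Fin 6 → ℝ)
          + x 4 • (Pi.single 4 1 + Pi.single 1 1 : Fin 6 → ℝ)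
          + x 5 • (Pi.single 5 1 - Pi.single 0 1 - Pi.single 1 1 : Fin 6 → ℝ) := by
        funext j
        fin_cases j <;>
          simp [Pi.single_apply] <;> linarith
      rw [hxe]
      refine add_mem (add_mem (add_mem ?_ ?_) ?_) ?_ <;>
        apply Submodule.smul_mem <;> apply Submodule.subset_span
      · exact ⟨0, rfl⟩
      · exact ⟨1, rfl⟩
      · exact ⟨2, rfl⟩
      · exact ⟨3, rfl⟩
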